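/- arXiv:1904.07031 — 7 statements merged into one kernel-verified Lean document; each statement's English description precedes it below -/
import Mathlib

section
/- Let G be a metrizable topological group and let X be a metrizable topological space, and let μ : G × X → X be a continuous action of G on X. Then the action μ is proper if and only if for every sequence (g_n) in G and every convergent sequence (x_n) in X such that the sequence (g_n • x_n) converges in X, the sequence (g_n) admits a convergent subsequence. -/
open Filter Topology

/-- A continuous action of a topological group `G` on a topological space `X` is *proper*
if the map `(g, x) ↦ (g • x, x)` is a proper map, i.e. the preimage of every compact
subset of `X × X` is a compact subset of `G × X`. -/
def IsProperAction (G X : Type*) [SMul G X] [TopologicalSpace G] [TopologicalSpace X] : Prop :=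
  ∀ K : Set (X × X), IsCompact K →
    IsCompact ((fun gx : G × X => (gx.1 • gx.2, gx.2)) ⁻¹' K)

/-! In metrizable spaces compactness is sequential compactness, so properness says: whenever
`(gₙ • xₙ, xₙ)` converges, a subsequence of `(gₙ, xₙ)` converges. Conversely, given a convergent
subsequence of `gₙ`, its limit `g₀` satisfies `g₀ • x₀ = y` by continuity of the action and
uniqueness of limits in `X`, so `(g₀, x₀)` lies over the limit `(y, x₀)`. -/

section

variable {G X : Type*} [SMul G X] [TopologicalSpace G] [TopologicalSpace X]

theorem IsProperAction.exists_subseq_tendsto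
    [FirstCountableTopology G] [FirstCountableTopology X]
    (h : IsProperAction G X) {g : ℕ → G} {x : ℕ → X} {x₀ y : X}
    (hx : Tendsto x atTop (𝓝 x₀)) (hgx : Tendsto (fun n => g n • x n) atTop (𝓝 y)) :
    ∃ φ : ℕ → ℕ, StrictMono φ ∧ ∃ g₀ : G, Tendsto (g ∘ φ) atTop (𝓝 g₀) := by
  have hK : IsCompact (insert (y, x₀) (Set.range fun n => (g n • x n, x n))) :=
    (hgx.prodMk_nhds hx).isCompact_insert_range
  obtain ⟨p, -, φ, hφ, hp⟩ :=
    (h _ hK).tendsto_subseq (x := fun n => (g n, x n)) fun n => Or.inr ⟨n, rfl⟩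
  exact ⟨φ, hφ, p.1, (continuous_fst.tendsto p).comp hp⟩

theorem isProperAction_of_exists_subseq_tendsto [TopologicalSpace.PseudoMetrizableSpace G]
    [TopologicalSpace.PseudoMetrizableSpace X] [T2Space X] [ContinuousSMul G X]
    (h : ∀ (g : ℕ → G) (x : ℕ → X) (x₀ y : X), Tendsto x atTop (𝓝 x₀) →
      Tendsto (fun n => g n • x n) atTop (𝓝 y) →
      ∃ φ : ℕ → ℕ, StrictMono φ ∧ ∃ g₀ : G, Tendsto (g ∘ φ) atTop (𝓝 g₀)) :
    IsProperAction G X := by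
  intro K hK
  refine IsSeqCompact.isCompact fun u hu => ?_
  obtain ⟨⟨y, x₀⟩, hyK, φ, hφ, hyx⟩ :=
    hK.tendsto_subseq (x := fun n => ((u n).1 • (u n).2, (u n).2)) hu
  have hx : Tendsto (fun n => (u (φ n)).2) atTop (𝓝 x₀) := (continuous_snd.tendsto _).comp hyx
  have hgx : Tendsto (fun n => (u (φ n)).1 • (u (φ n)).2) atTop (𝓝 y) :=
    (continuous_fst.tendsto _).comp hyx
  obtain ⟨ψ, hψ, g₀, hg⟩ := h _ _ x₀ y hx hgx
  have hx' := hx.comp hψ.tendsto_atTop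
  have hsmul : g₀ • x₀ = y := tendsto_nhds_unique (hg.smul hx') (hgx.comp hψ.tendsto_atTop)
  refine ⟨(g₀, x₀), ?_, φ ∘ ψ, hφ.comp hψ, hg.prodMk_nhds hx'⟩
  simpa [hsmul] using hyK

end

theorem properAction_iff_subsequence_of_metrizable_general
    (G X : Type*) [Group G] [TopologicalSpace G]
    [TopologicalSpace.MetrizableSpace G]
    [TopologicalSpace X] [TopologicalSpace.MetrizableSpace X]
    [MulAction G X] [ContinuousSMul G X] :
    IsProperAction G X ↔
      ∀ (g : ℕ → G) (x : ℕ → X) (x₀ : X),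
        Tendsto x atTop (𝓝 x₀) →
        (∃ y : X, Tendsto (fun n => g n • x n) atTop (𝓝 y)) →
        ∃ φ : ℕ → ℕ, StrictMono φ ∧ ∃ g₀ : G, Tendsto (g ∘ φ) atTop (𝓝 g₀) :=
  ⟨fun h _ _ _ hx ⟨_, hgx⟩ => h.exists_subseq_tendsto hx hgx, fun h =>
    isProperAction_of_exists_subseq_tendsto fun g x x₀ y hx hgx => h g x x₀ hx ⟨y, hgx⟩⟩

/-- For a metrizable topological group `G` acting continuously on a
metrizable space `X`, the action is proper if and only if for every sequence `gₙ` in `G`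
and every convergent sequence `xₙ` in `X` such that `gₙ • xₙ` converges in `X`, the
sequence `gₙ` admits a convergent subsequence. -/
theorem properAction_iff_subsequence_of_metrizable
    (G X : Type*) [Group G] [TopologicalSpace G] [IsTopologicalGroup G]
    [TopologicalSpace.MetrizableSpace G]
    [TopologicalSpace X] [TopologicalSpace.MetrizableSpace X]
    [MulAction G X] [ContinuousSMul G X] :
    IsProperAction G X ↔
      ∀ (g : ℕ → G) (x : ℕ → X) (x₀ : X),
        Tendsto x atTop (𝓝 x₀) →
        (∃ y : X, Tendsto (fun n => g n • x n) atTop (𝓝 y)) →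
        ∃ φ : ℕ → ℕ, StrictMono φ ∧ ∃ g₀ : G, Tendsto (g ∘ φ) atTop (𝓝 g₀) :=
  properAction_iff_subsequence_of_metrizable_general G X
end

section
/- Let G be a topological group whose topology is induced by a complete left-invariant metric, and let X be a metric space on which G acts continuously by isometries (i.e., d(g • x, g • y) = d(x, y) for all g ∈ G and x, y ∈ X). Then the action is proper if and only if for every point x₀ ∈ X and every sequence (g_n) in G such that the sequence (g_n • x₀) converges to x₀ in X, the sequence (g_n) admits a convergent subsequence. -/
open Filter Topology

/-!
Properness only has to be tested at sequences of the form `gₙ • x → y`: given `(gₙ • xₙ, xₙ)`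
converging to `(y, x)`, isometry gives `gₙ • x → y`. The hypothesis at `x` makes the stabilizer
of `x` compact and forces every `u` with `u • x` close to `x` to be close to that stabilizer.
If `gₙ • x → y`, then `gₙ • x` is eventually close to `g_N • x`, so `g_N⁻¹ gₙ` is close to the
stabilizer, and by left invariance the tail of `(gₙ)` lies near the compact set
`g_N • Stab(x)`. Thus `(gₙ)` is totally bounded, and completeness gives a convergent subsequence.
-/

open Set Metric MulAction

def HasConvergentSubseq {α : Type*} [TopologicalSpace α] (u : ℕ → α) : Prop :=
  ∃ φ : ℕ → ℕ, StrictMono φ ∧ ∃ a : α, Tendsto (u ∘ φ) atTop (𝓝 a)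

theorem IsProperAction.hasConvergentSubseq_of_tendsto_smul {G X : Type*} [SMul G X]
    [TopologicalSpace G] [TopologicalSpace X] [FirstCountableTopology G]
    [FirstCountableTopology X] (h : IsProperAction G X) {x y : X} {g : ℕ → G}
    (hg : Tendsto (fun n => g n • x) atTop (𝓝 y)) : HasConvergentSubseq g := by
  have hK : IsCompact (insert (y, x) (range fun n => (g n • x, x))) :=
    (hg.prodMk_nhds tendsto_const_nhds).isCompact_insert_range
  obtain ⟨p, -, φ, hφ, hlim⟩ :=
    (h _ hK).tendsto_subseq (x := fun n => (g n, x)) fun n => Or.inr ⟨n, rfl⟩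
  exact ⟨φ, hφ, p.1, hlim.fst_nhds⟩

theorem Filter.Tendsto.smul_of_isIsometricSMul {ι G X : Type*} [PseudoMetricSpace X] [SMul G X]
    [IsIsometricSMul G X] {l : Filter ι} {g : ι → G} {x : ι → X} {x₀ y : X}
    (hgx : Tendsto (fun i => g i • x i) l (𝓝 y)) (hx : Tendsto x l (𝓝 x₀)) :
    Tendsto (fun i => g i • x₀) l (𝓝 y) :=
  hgx.congr_dist (by simpa only [dist_smul] using tendsto_iff_dist_tendsto_zero.1 hx)

theorem isProperAction_of_forall_hasConvergentSubseq {G X : Type*} [PseudoMetricSpace G]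
    [MetricSpace X] [SMul G X] [IsIsometricSMul G X] [ContinuousSMul G X]
    (H : ∀ (x y : X) (g : ℕ → G),
      Tendsto (fun n => g n • x) atTop (𝓝 y) → HasConvergentSubseq g) :
    IsProperAction G X := by
  intro K hK
  refine IsSeqCompact.isCompact fun p hp => ?_
  obtain ⟨⟨y, x⟩, hyx, φ, hφ, hlim⟩ := hK.tendsto_subseq hp
  have hx : Tendsto (fun n => (p (φ n)).2) atTop (𝓝 x) := hlim.snd_nhds
  have hgx : Tendsto (fun n => (p (φ n)).1 • x) atTop (𝓝 y) :=
    hlim.fst_nhds.smul_of_isIsometricSMul hx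
  obtain ⟨ψ, hψ, g₀, hg₀⟩ := H x y _ hgx
  have hg₀x : g₀ • x = y := tendsto_nhds_unique (hg₀.smul_const x) (hgx.comp hψ.tendsto_atTop)
  refine ⟨(g₀, x), ?_, φ ∘ ψ, hφ.comp hψ, hg₀.prodMk_nhds (hx.comp hψ.tendsto_atTop)⟩
  show (g₀ • x, x) ∈ K
  rwa [hg₀x]

theorem mem_stabilizer_of_tendsto {ι G X : Type*} [Group G] [TopologicalSpace G]
    [TopologicalSpace X] [T2Space X] [MulAction G X] [ContinuousSMul G X] {x : X}
    {l : Filter ι} [l.NeBot] {u : ι → G} {g₀ : G}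
    (hux : Tendsto (fun n => u n • x) l (𝓝 x)) (hu : Tendsto u l (𝓝 g₀)) :
    g₀ ∈ stabilizer G x :=
  tendsto_nhds_unique (hu.smul_const x) hux

section Stabilizer

variable {G X : Type*} [Group G] [PseudoMetricSpace G] [MetricSpace X] [MulAction G X]
  [ContinuousSMul G X] {x : X}

theorem isCompact_stabilizer_of_hasConvergentSubseq
    (hx : ∀ u : ℕ → G, Tendsto (fun n => u n • x) atTop (𝓝 x) → HasConvergentSubseq u) :
    IsCompact (stabilizer G x : Set G) := by
  refine IsSeqCompact.isCompact fun u hu => ?_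
  have hux : Tendsto (fun n => u n • x) atTop (𝓝 x) := by
    simpa only [mem_stabilizer_iff.1 (hu _)] using tendsto_const_nhds
  obtain ⟨φ, hφ, g₀, hg₀⟩ := hx u hux
  exact ⟨g₀, mem_stabilizer_of_tendsto (hux.comp hφ.tendsto_atTop) hg₀, φ, hφ, hg₀⟩

theorem exists_dist_lt_of_dist_smul_lt
    (hx : ∀ u : ℕ → G, Tendsto (fun n => u n • x) atTop (𝓝 x) → HasConvergentSubseq u)
    {ε : ℝ} (hε : 0 < ε) :
    ∃ δ > 0, ∀ u : G, dist (u • x) x < δ → ∃ s ∈ stabilizer G x, dist u s < ε := by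
  by_contra! hfar
  choose u hsmall hu using fun n : ℕ => hfar (1 / (n + 1)) Nat.one_div_pos_of_nat
  have hux : Tendsto (fun n => u n • x) atTop (𝓝 x) :=
    tendsto_iff_dist_tendsto_zero.2 <| squeeze_zero (fun _ => dist_nonneg)
      (fun n => (hsmall n).le) tendsto_one_div_add_atTop_nhds_zero_nat
  obtain ⟨φ, hφ, g₀, hg₀⟩ := hx u hux
  have hg₀S := mem_stabilizer_of_tendsto (hux.comp hφ.tendsto_atTop) hg₀
  obtain ⟨n, hn⟩ := (hg₀.eventually (ball_mem_nhds g₀ hε)).exists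
  exact (hu (φ n) g₀ hg₀S).not_gt hn

end Stabilizer

section TotallyBounded

variable {G X : Type*} [Group G] [PseudoMetricSpace G] [IsIsometricSMul G G]
  [MetricSpace X] [MulAction G X] [IsIsometricSMul G X] [ContinuousSMul G X] {x y : X}
  {g : ℕ → G}

theorem totallyBounded_range_of_tendsto_smul
    (hx : ∀ u : ℕ → G, Tendsto (fun n => u n • x) atTop (𝓝 x) → HasConvergentSubseq u)
    (hg : Tendsto (fun n => g n • x) atTop (𝓝 y)) : TotallyBounded (range g) := by
  refine totallyBounded_iff.2 fun ε hε => ?_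
  obtain ⟨δ, hδ, hnear⟩ := exists_dist_lt_of_dist_smul_lt hx (half_pos hε)
  obtain ⟨N, hN⟩ := Metric.tendsto_atTop.1 hg (δ / 2) (half_pos hδ)
  obtain ⟨t, -, ht, hcover⟩ :=
    (isCompact_stabilizer_of_hasConvergentSubseq hx).finite_cover_balls (half_pos hε)
  refine ⟨(g N * ·) '' t ∪ g '' Iio N, (ht.image _).union ((finite_Iio N).image g), ?_⟩
  rintro - ⟨n, rfl⟩
  rcases lt_or_ge n N with hn | hn
  · exact mem_biUnion (mem_union_right _ (mem_image_of_mem g hn)) (mem_ball_self hε)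
  have hmove : dist (((g N)⁻¹ * g n) • x) x < δ := calc
    _ = dist (g n • x) (g N • x) := by
      rw [← dist_smul (g N), smul_smul, mul_inv_cancel_left]
    _ ≤ dist (g n • x) y + dist (g N • x) y := dist_triangle_right _ _ _
    _ < δ / 2 + δ / 2 := add_lt_add (hN n hn) (hN N le_rfl)
    _ = δ := add_halves δ
  obtain ⟨s, hs, hns⟩ := hnear _ hmove
  obtain ⟨c, hc, hsc⟩ := mem_iUnion₂.1 (hcover hs)
  refine mem_biUnion (mem_union_left _ (mem_image_of_mem _ hc)) ?_
  calc dist (g n) (g N * c) = dist ((g N)⁻¹ * g n) c := by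
        rw [← dist_mul_left (g N)⁻¹, inv_mul_cancel_left]
    _ ≤ dist ((g N)⁻¹ * g n) s + dist s c := dist_triangle _ _ _
    _ < ε / 2 + ε / 2 := add_lt_add hns hsc
    _ = ε := add_halves ε

theorem hasConvergentSubseq_of_tendsto_smul [CompleteSpace G]
    (hx : ∀ u : ℕ → G, Tendsto (fun n => u n • x) atTop (𝓝 x) → HasConvergentSubseq u)
    (hg : Tendsto (fun n => g n • x) atTop (𝓝 y)) : HasConvergentSubseq g := by
  have hcompact : IsCompact (closure (range g)) :=
    (totallyBounded_range_of_tendsto_smul hx hg).closure.isCompact_of_isClosed isClosed_closure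
  obtain ⟨g₀, -, φ, hφ, hlim⟩ := hcompact.tendsto_subseq fun n => subset_closure ⟨n, rfl⟩
  exact ⟨φ, hφ, g₀, hlim⟩

end TotallyBounded

theorem properAction_iff_subsequence_at_fixed_point_general
    (G X : Type*) [Group G] [MetricSpace G] [CompleteSpace G]
    (hinv : ∀ h g₁ g₂ : G, dist (h * g₁) (h * g₂) = dist g₁ g₂)
    [MetricSpace X] [MulAction G X] [ContinuousSMul G X]
    (hiso : ∀ (g : G) (x y : X), dist (g • x) (g • y) = dist x y) :
    IsProperAction G X ↔
      ∀ (x₀ : X) (g : ℕ → G),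
        Tendsto (fun n => g n • x₀) atTop (𝓝 x₀) →
        ∃ φ : ℕ → ℕ, StrictMono φ ∧ ∃ g₀ : G, Tendsto (g ∘ φ) atTop (𝓝 g₀) := by
  have : IsIsometricSMul G G := ⟨fun h => Isometry.of_dist_eq (hinv h)⟩
  have : IsIsometricSMul G X := ⟨fun g => Isometry.of_dist_eq (hiso g)⟩
  exact ⟨fun h _ _ hg => h.hasConvergentSubseq_of_tendsto_smul hg,
    fun H => isProperAction_of_forall_hasConvergentSubseq fun x _ _ hg =>
      hasConvergentSubseq_of_tendsto_smul (H x) hg⟩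

/-- Let `G` be a topological group whose topology is induced by a complete
left-invariant metric, acting continuously by isometries on a metric space `X`.  Then the
action is proper if and only if for every point `x₀ ∈ X` and every sequence `gₙ` in `G` such
that `gₙ • x₀` converges to `x₀`, the sequence `gₙ` admits a convergent subsequence. -/
theorem properAction_iff_subsequence_at_fixed_point
    (G X : Type*) [Group G] [MetricSpace G] [IsTopologicalGroup G] [CompleteSpace G]
    (hinv : ∀ h g₁ g₂ : G, dist (h * g₁) (h * g₂) = dist g₁ g₂)
    [MetricSpace X] [MulAction G X] [ContinuousSMul G X]
    (hiso : ∀ (g : G) (x y : X), dist (g • x) (g • y) = dist x y) :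
    IsProperAction G X ↔
      ∀ (x₀ : X) (g : ℕ → G),
        Tendsto (fun n => g n • x₀) atTop (𝓝 x₀) →
        ∃ φ : ℕ → ℕ, StrictMono φ ∧ ∃ g₀ : G, Tendsto (g ∘ φ) atTop (𝓝 g₀) :=
  properAction_iff_subsequence_at_fixed_point_general G X hinv hiso
end

section
/- Let a topological group G act continuously on a topological space X, let p ∈ X, and let S ⊆ X be a subset containing p satisfying slice property (ii): if g ∈ G is such that (g • S) ∩ S ≠ ∅, then g ∈ G_p. Let ρ : G → G/G_p be the quotient map onto the coset space, let U ⊆ G/G_p, and let χ : U → G be a section of ρ (i.e., ρ(χ(u)) = u for all u ∈ U). Then the map F : U × S → X defined by F(u,s) = χ(u) • s is injective. -/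
open Pointwise

section

variable {G X : Type*} [Group G] [MulAction G X] {H : Subgroup G} {S : Set X}

theorem inv_mul_mem_of_smul_eq_smul (hS : ∀ g : G, (g • S ∩ S).Nonempty → g ∈ H)
    {g₁ g₂ : G} {s₁ s₂ : X} (hs₁ : s₁ ∈ S) (hs₂ : s₂ ∈ S) (h : g₁ • s₁ = g₂ • s₂) :
    g₂⁻¹ * g₁ ∈ H :=
  hS _ ⟨s₂, ⟨s₁, hs₁, by simp only [mul_smul, h, inv_smul_smul]⟩, hs₂⟩

theorem injective_section_smul (hS : ∀ g : G, (g • S ∩ S).Nonempty → g ∈ H)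
    {U : Set (G ⧸ H)} {χ : U → G} (hχ : ∀ u : U, QuotientGroup.mk (χ u) = (u : G ⧸ H)) :
    Function.Injective (fun us : U × S => χ us.1 • (us.2 : X)) := by
  rintro ⟨u₁, s₁, hs₁⟩ ⟨u₂, s₂, hs₂⟩ (h : χ u₁ • s₁ = χ u₂ • s₂)
  obtain rfl : u₁ = u₂ := Subtype.ext <| by
    rw [← hχ u₁, ← hχ u₂, QuotientGroup.eq]
    exact inv_mul_mem_of_smul_eq_smul hS hs₂ hs₁ h.symm
  obtain rfl : s₁ = s₂ := smul_left_cancel _ h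
  rfl

end

theorem slice_map_injective_general
    (G X : Type*) [Group G] [MulAction G X] (p : X) (S : Set X)
    (hii : ∀ g : G, (g • S ∩ S).Nonempty → g ∈ MulAction.stabilizer G p)
    (U : Set (G ⧸ MulAction.stabilizer G p)) (χ : U → G)
    (hsec : ∀ u : U, QuotientGroup.mk (χ u) = (u : G ⧸ MulAction.stabilizer G p)) :
    Function.Injective (fun us : U × S => χ us.1 • (us.2 : X)) :=
  injective_section_smul hii hsec

/-- Let a topological group `G` act continuously on a topological space `X`,
let `p ∈ S ⊆ X` satisfy slice property (ii), let `U ⊆ G ⧸ G_p`, and let `χ : U → G` be a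
section of the quotient map `ρ : G → G ⧸ G_p`.  Then the map `F : U × S → X`,
`F(u, s) = χ(u) • s`, is injective. -/
theorem slice_map_injective
    (G X : Type*) [Group G] [TopologicalSpace G] [IsTopologicalGroup G]
    [TopologicalSpace X] [MulAction G X] [ContinuousSMul G X]
    (p : X) (S : Set X) (hpS : p ∈ S)
    (hii : ∀ g : G, (g • S ∩ S).Nonempty → g ∈ MulAction.stabilizer G p)
    (U : Set (G ⧸ MulAction.stabilizer G p)) (χ : U → G)
    (hsec : ∀ u : U, QuotientGroup.mk (χ u) = (u : G ⧸ MulAction.stabilizer G p)) :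
    Function.Injective (fun us : U × S => χ us.1 • (us.2 : X)) :=
  slice_map_injective_general G X p S hii U χ hsec
end

section
/- Let a topological group G act continuously on a topological space X and let S ⊆ X be a slice through p ∈ X, with data U ⊆ G/G_p open containing the identity coset, χ : U → G a continuous section of the quotient map ρ : G → G/G_p, and F : U × S → X, F(u,s) = χ(u) • s, a homeomorphism onto an open neighborhood of p in X. Then the map φ : G × S → X defined by φ(g,s) = g • s is an open map onto its image G • S = {g • s : g ∈ G, s ∈ S} equipped with the subspace topology; that is, for every open subset W ⊆ G × S, φ(W) is open in G • S. -/
open Pointwise Topology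

/-
Translating the open sets `F(Ω)` by elements of `G` covers the image of `G × S`: a point
`g • s` with `(g, s) ∈ W` equals `(g * (χ u₀)⁻¹) • F(u₀, s)`, and the translate by
`g * (χ u₀)⁻¹` of the image under `F` of an open neighbourhood of `(u₀, s)` is an open
subset of `φ(W)`. Hence `φ` is already open as a map into `X`, and so into its image.
-/

theorem isOpenMap_smul_of_isOpenMap_smul_comp {G X U : Type*} [Group G] [TopologicalSpace G]
    [ContinuousMul G] [TopologicalSpace X] [MulAction G X] [ContinuousConstSMul G X]
    [TopologicalSpace U] [Nonempty U] (χ : U → G) (hχ : Continuous χ) (S : Set X)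
    (hF : IsOpenMap fun us : U × S => χ us.1 • (us.2 : X)) :
    IsOpenMap fun w : G × S => w.1 • (w.2 : X) := by
  intro W hW
  rw [isOpen_iff_forall_mem_open]
  rintro _ ⟨⟨g, s⟩, hgs, rfl⟩
  obtain ⟨u₀⟩ := ‹Nonempty U›
  set a := g * (χ u₀)⁻¹
  set Ω := (fun us : U × S => (a * χ us.1, us.2)) ⁻¹' W
  have hΩ : IsOpen Ω :=
    hW.preimage ((continuous_const.mul (hχ.comp continuous_fst)).prodMk continuous_snd)
  refine ⟨a • (fun us : U × S => χ us.1 • (us.2 : X)) '' Ω, ?_, (hF Ω hΩ).smul a, ?_⟩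
  · rintro _ ⟨_, ⟨⟨u, t⟩, hut, rfl⟩, rfl⟩
    exact ⟨(a * χ u, t), hut, mul_smul _ _ _⟩
  · have hu₀ : (u₀, s) ∈ Ω := by simpa [Ω, a] using hgs
    exact ⟨_, ⟨(u₀, s), hu₀, rfl⟩, by simp [a, smul_smul]⟩

theorem slice_saturation_map_isOpenMap_general
    (G X : Type*) [Group G] [TopologicalSpace G] [IsTopologicalGroup G]
    [TopologicalSpace X] [MulAction G X] [ContinuousSMul G X]
    (p : X) (S : Set X)
    (U : Set (G ⧸ MulAction.stabilizer G p))
    (hUe : QuotientGroup.mk (1 : G) ∈ U)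
    (χ : U → G) (hχ : Continuous χ)
    (hF : IsOpenEmbedding (fun us : U × S => χ us.1 • (us.2 : X))) :
    IsOpenMap (fun w : G × S =>
      (⟨w.1 • (w.2 : X), ⟨w.1, w.2, w.2.2, rfl⟩⟩ :
        {x : X | ∃ g : G, ∃ s ∈ S, g • s = x})) :=
  have : Nonempty U := ⟨⟨_, hUe⟩⟩
  (isOpenMap_smul_of_isOpenMap_smul_comp χ hχ S hF.isOpenMap).subtype_mk _

/-- Let a topological group `G` act continuously on a topological space `X`
and let `S ⊆ X` be a slice through `p ∈ X`, with data: `U ⊆ G ⧸ G_p` open containing the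
identity coset, `χ : U → G` a continuous section of the quotient map, and
`F : U × S → X, F(u,s) = χ(u) • s` a homeomorphism onto an open neighborhood of `p`.
Then the map `φ : G × S → X, φ(g,s) = g • s` is an open map onto its image
`G • S = {g • s : g ∈ G, s ∈ S}` with the subspace topology. -/
theorem slice_saturation_map_isOpenMap
    (G X : Type*) [Group G] [TopologicalSpace G] [IsTopologicalGroup G]
    [TopologicalSpace X] [MulAction G X] [ContinuousSMul G X]
    (p : X) (S : Set X) (hpS : p ∈ S)
    (hi : ∀ g ∈ MulAction.stabilizer G p, g • S ⊆ S)
    (hii : ∀ g : G, (g • S ∩ S).Nonempty → g ∈ MulAction.stabilizer G p)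
    (U : Set (G ⧸ MulAction.stabilizer G p)) (hU : IsOpen U)
    (hUe : QuotientGroup.mk (1 : G) ∈ U)
    (χ : U → G) (hχ : Continuous χ)
    (hsec : ∀ u : U, QuotientGroup.mk (χ u) = (u : G ⧸ MulAction.stabilizer G p))
    (hF : IsOpenEmbedding (fun us : U × S => χ us.1 • (us.2 : X)))
    (hpF : p ∈ Set.range (fun us : U × S => χ us.1 • (us.2 : X))) :
    IsOpenMap (fun w : G × S =>
      (⟨w.1 • (w.2 : X), ⟨w.1, w.2, w.2.2, rfl⟩⟩ :
        {x : X | ∃ g : G, ∃ s ∈ S, g • s = x})) :=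
  slice_saturation_map_isOpenMap_general G X p S U hUe χ hχ hF
end

section
/- Let a topological group G act continuously on a topological space X and let S ⊆ X be a slice through p ∈ X. Consider the action of the stabilizer G_p on G × S given by h ⋆ (g,s) = (g h, h⁻¹ • s) for h ∈ G_p, and let G ×_{G_p} S denote its orbit space with the quotient topology and π : G × S → G ×_{G_p} S the orbit projection. Then the map φ : G × S → X, φ(g,s) = g • s, descends to a map ψ : G ×_{G_p} S → X with ψ ∘ π = φ, and ψ is a homeomorphism from G ×_{G_p} S onto the set G • S = {g • s : g ∈ G, s ∈ S} equipped with the subspace topology. -/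
/-!
The orbit map `(g, s) ↦ g • s` is continuous and constant on `G_p`-orbits, so `ψ` is continuous;
it is injective by condition (ii), since `g • s = g' • s'` forces `g⁻¹ g' ∈ G_p`. For the
continuity of `ψ⁻¹`, write `F (u, s) = χ u • s` for the open chart of (iii): the translates
`g₀ • range F` cover `G • S`, and on `g₀ • range F` the inverse of `ψ` is
`y ↦ [(g₀ χ u, s)]` with `(u, s) = F⁻¹ (g₀⁻¹ • y)`, which is continuous.
-/

open Pointwise Topology

/-- `S` is a *slice* through `p` for a continuous action of a topological group `G` on `X`:
`p ∈ S`; (i) `g • S ⊆ S` for every `g` in the stabilizer `G_p`; (ii) if `(g • S) ∩ S ≠ ∅`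
then `g ∈ G_p`; (iii) there are an open neighborhood `U` of the identity coset in `G ⧸ G_p`
and a continuous section `χ : U → G` of the quotient map such that
`F : U × S → X, F(u,s) = χ(u) • s` is a homeomorphism onto an open neighborhood of `p`. -/
def IsSlice (G : Type*) {X : Type*} [Group G] [TopologicalSpace G] [TopologicalSpace X]
    [MulAction G X] (p : X) (S : Set X) : Prop :=
  p ∈ S ∧
  (∀ g ∈ MulAction.stabilizer G p, g • S ⊆ S) ∧
  (∀ g : G, (g • S ∩ S).Nonempty → g ∈ MulAction.stabilizer G p) ∧
  ∃ U : Set (G ⧸ MulAction.stabilizer G p), IsOpen U ∧ QuotientGroup.mk (1 : G) ∈ U ∧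
    ∃ χ : U → G, Continuous χ ∧
      (∀ u : U, QuotientGroup.mk (χ u) = (u : G ⧸ MulAction.stabilizer G p)) ∧
      IsOpenEmbedding (fun us : U × S => χ us.1 • (us.2 : X)) ∧
      p ∈ Set.range (fun us : U × S => χ us.1 • (us.2 : X))

/-- The orbit equivalence relation on `G × S` of the action of the stabilizer `G_p`
given by `h ⋆ (g, s) = (g * h, h⁻¹ • s)`. -/
def sliceSetoid (G : Type*) {X : Type*} [Group G] [MulAction G X] (p : X) (S : Set X) :
    Setoid (G × S) where
  r a b := ∃ h : G, h • p = p ∧ b.1 = a.1 * h ∧ (b.2 : X) = h⁻¹ • (a.2 : X)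
  iseqv := by
    constructor
    · exact fun a => ⟨1, by simp, by simp, by simp⟩
    · rintro a b ⟨h, hp, h1, h2⟩
      refine ⟨h⁻¹, ?_, by rw [h1, mul_assoc, mul_inv_cancel, mul_one], by rw [h2]; simp⟩
      conv_lhs => rw [← hp]
      simp
    · rintro a b c ⟨h, hp, h1, h2⟩ ⟨k, kp, k1, k2⟩
      refine ⟨h * k, ?_, by rw [k1, h1, mul_assoc], by rw [k2, h2, mul_inv_rev, mul_smul]⟩
      rw [mul_smul, kp, hp]

theorem Equiv.continuous_symm_of_locally_rightInverse {A B : Type*} [TopologicalSpace A]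
    [TopologicalSpace B] (e : A ≃ B)
    (h : ∀ b, ∃ σ : B → A, ContinuousAt σ b ∧ ∀ᶠ y in 𝓝 b, e (σ y) = y) :
    Continuous e.symm :=
  continuous_iff_continuousAt.2 fun b => by
    obtain ⟨σ, hσ, hσe⟩ := h b
    exact hσ.congr (hσe.mono fun y hy => (e.symm_apply_eq.2 hy.symm).symm)

namespace sliceSetoid

variable (G : Type*) {X : Type*} [Group G] [MulAction G X] (p : X) (S : Set X)

def tubeMap : Quotient (sliceSetoid G p S) → {x : X | ∃ g : G, ∃ s ∈ S, g • s = x} :=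
  Quotient.lift (fun gs => ⟨gs.1 • (gs.2 : X), gs.1, gs.2, gs.2.2, rfl⟩)
    fun _ _ ⟨h, _, h₁, h₂⟩ => Subtype.ext <| by
      simp only [h₁, h₂, mul_smul, smul_inv_smul]

variable {G p S}

@[simp]
theorem tubeMap_mk (g : G) (s : S) :
    (tubeMap G p S (Quotient.mk _ (g, s)) : X) = g • (s : X) :=
  rfl

theorem tubeMap_surjective : Function.Surjective (tubeMap G p S) := by
  rintro ⟨x, g, s, hs, rfl⟩
  exact ⟨Quotient.mk _ (g, ⟨s, hs⟩), rfl⟩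

theorem tubeMap_injective
    (hS : ∀ g : G, (g • S ∩ S).Nonempty → g ∈ MulAction.stabilizer G p) :
    Function.Injective (tubeMap G p S) := by
  rintro ⟨a⟩ ⟨b⟩ hab
  have hab : a.1 • (a.2 : X) = b.1 • (b.2 : X) := congrArg Subtype.val hab
  have hba : (a.1⁻¹ * b.1) • (b.2 : X) = a.2 := by rw [mul_smul, ← hab, inv_smul_smul]
  refine Quotient.sound ⟨a.1⁻¹ * b.1, hS _ ⟨a.2, ⟨b.2, b.2.2, hba⟩, a.2.2⟩, by group, ?_⟩
  rw [← hba, inv_smul_smul]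

variable [TopologicalSpace G] [TopologicalSpace X]

theorem continuous_tubeMap [ContinuousSMul G X] : Continuous (tubeMap G p S) :=
  Continuous.quotient_lift
    ((continuous_fst.smul (continuous_subtype_val.comp continuous_snd)).subtype_mk _) _

theorem exists_local_rightInverse_tubeMap [ContinuousMul G] [ContinuousConstSMul G X]
    {U : Type*} [TopologicalSpace U] [Nonempty U] {χ : U → G} (hχ : Continuous χ)
    (hF : IsOpenEmbedding fun us : U × S => χ us.1 • (us.2 : X))
    (x : {x : X | ∃ g : G, ∃ s ∈ S, g • s = x}) :
    ∃ σ : {x : X | ∃ g : G, ∃ s ∈ S, g • s = x} → Quotient (sliceSetoid G p S),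
      ContinuousAt σ x ∧ ∀ᶠ y in 𝓝 x, tubeMap G p S (σ y) = y := by
  obtain ⟨g, s, hs, hgs⟩ := x.2
  obtain ⟨u₀⟩ := ‹Nonempty U›
  have : Nonempty (U × S) := ⟨(u₀, ⟨s, hs⟩)⟩
  set F := fun us : U × S => χ us.1 • (us.2 : X)
  set g₀ := g * (χ u₀)⁻¹
  have hx : g₀⁻¹ • (x : X) ∈ Set.range F :=
    ⟨(u₀, ⟨s, hs⟩), by simp only [F, g₀, ← hgs, mul_inv_rev, inv_inv, mul_smul, inv_smul_smul]⟩
  set τ : X → U × S := fun y => (hF.toOpenPartialHomeomorph F).symm (g₀⁻¹ • y)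
  refine ⟨fun y => Quotient.mk _ (g₀ * χ (τ y).1, (τ y).2), ?_, ?_⟩
  · have hτ : ContinuousAt τ x :=
      ((hF.toOpenPartialHomeomorph F).continuousAt_symm (by simpa using hx)).comp
        (continuous_const_smul _).continuousAt
    exact (continuous_quotient_mk'.comp ((continuous_const.mul (hχ.comp continuous_fst)).prodMk
      continuous_snd)).continuousAt.comp (hτ.comp continuous_subtype_val.continuousAt)
  · have hV : IsOpen {y : X | g₀⁻¹ • y ∈ Set.range F} :=
      hF.isOpen_range.preimage (continuous_const_smul _)
    filter_upwards [(hV.preimage continuous_subtype_val).mem_nhds hx] with y hy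
    apply Subtype.ext
    rw [tubeMap_mk, mul_smul]
    exact (congrArg (g₀ • ·) (hF.toOpenPartialHomeomorph_right_inv F hy)).trans (smul_inv_smul _ _)

end sliceSetoid

/-- Let `S` be a slice through `p` for a continuous action of a topological
group `G` on `X`.  Then the map `φ : G × S → X, φ(g,s) = g • s` descends to the twisted
quotient `G ×_{G_p} S` (with the quotient topology) and induces a homeomorphism
`ψ : G ×_{G_p} S ≃ₜ G • S`, where `G • S = {g • s : g ∈ G, s ∈ S}` carries the subspace
topology and `ψ ∘ π = φ`. -/
theorem slice_tube_homeomorph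
    (G X : Type*) [Group G] [TopologicalSpace G] [IsTopologicalGroup G]
    [TopologicalSpace X] [MulAction G X] [ContinuousSMul G X]
    (p : X) (S : Set X) (hS : IsSlice G p S) :
    ∃ ψ : Quotient (sliceSetoid G p S) ≃ₜ {x : X | ∃ g : G, ∃ s ∈ S, g • s = x},
      ∀ (g : G) (s : S),
        (ψ (Quotient.mk (sliceSetoid G p S) (g, s)) : X) = g • (s : X) := by
  obtain ⟨-, -, hfree, U, -, hU, χ, hχ, -, hF, -⟩ := hS
  have : Nonempty U := ⟨⟨_, hU⟩⟩
  let e := Equiv.ofBijective _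
    ⟨sliceSetoid.tubeMap_injective hfree, sliceSetoid.tubeMap_surjective⟩
  exact ⟨⟨e, sliceSetoid.continuous_tubeMap,
    e.continuous_symm_of_locally_rightInverse (sliceSetoid.exists_local_rightInverse_tubeMap hχ hF)⟩,
    fun _ _ => rfl⟩
end

section
/- Let a topological group G act continuously on a topological space X, let p ∈ X, and let S ⊆ X be a subset containing p satisfying slice property (ii) (if g ∈ G is such that (g • S) ∩ S ≠ ∅, then g ∈ G_p), together with a subset U ⊆ G/G_p and a section χ : U → G of the quotient map ρ : G → G/G_p. Let N = {χ(u) • s : u ∈ U, s ∈ S}. Then for every q ∈ N there exists f ∈ G such that f⁻¹ G_q f ⊆ G_p, i.e., f⁻¹ h f ∈ G_p for every h in the stabilizer G_q of q. -/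
open Pointwise MulAction

theorem MulAction.stabilizer_le_of_smul_inter_nonempty {G X : Type*} [Group G] [MulAction G X]
    {p : X} {S : Set X} (hS : ∀ g : G, (g • S ∩ S).Nonempty → g ∈ stabilizer G p)
    {s : X} (hs : s ∈ S) : stabilizer G s ≤ stabilizer G p :=
  fun g hg => hS g ⟨s, ⟨s, hs, hg⟩, hs⟩

theorem MulAction.inv_mul_mul_mem_stabilizer {G X : Type*} [Group G] [MulAction G X]
    {g h : G} {x : X} (hh : h • g • x = g • x) : g⁻¹ * h * g ∈ stabilizer G x := by
  simp only [mem_stabilizer_iff, mul_smul, hh, inv_smul_smul]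

theorem stabilizer_conjugate_into_of_slice_general
    (G X : Type*) [Group G] [MulAction G X]
    (p : X) (S : Set X)
    (hii : ∀ g : G, (g • S ∩ S).Nonempty → g ∈ MulAction.stabilizer G p)
    (U : Set (G ⧸ MulAction.stabilizer G p)) (χ : U → G) :
    ∀ q : X, (∃ u : U, ∃ s ∈ S, χ u • s = q) →
      ∃ f : G, ∀ h : G, h • q = q → (f⁻¹ * h * f) • p = p := by
  rintro q ⟨u, s, hs, rfl⟩
  exact ⟨χ u, fun h hh =>
    stabilizer_le_of_smul_inter_nonempty hii hs (inv_mul_mul_mem_stabilizer hh)⟩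

/-- Let a topological group `G` act continuously on a topological space `X`,
let `p ∈ S ⊆ X` satisfy slice property (ii), and let `χ : U → G` be a section of the
quotient map `ρ : G → G ⧸ G_p` on a subset `U ⊆ G ⧸ G_p`.  Let
`N = {χ(u) • s : u ∈ U, s ∈ S}`.  Then for every `q ∈ N` there exists `f ∈ G` with
`f⁻¹ G_q f ⊆ G_p`, i.e. `f⁻¹ * h * f ∈ G_p` for every `h` in the stabilizer of `q`. -/
theorem stabilizer_conjugate_into_of_slice
    (G X : Type*) [Group G] [TopologicalSpace G] [IsTopologicalGroup G]
    [TopologicalSpace X] [MulAction G X] [ContinuousSMul G X]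
    (p : X) (S : Set X) (hpS : p ∈ S)
    (hii : ∀ g : G, (g • S ∩ S).Nonempty → g ∈ MulAction.stabilizer G p)
    (U : Set (G ⧸ MulAction.stabilizer G p)) (χ : U → G)
    (hsec : ∀ u : U, QuotientGroup.mk (χ u) = (u : G ⧸ MulAction.stabilizer G p)) :
    ∀ q : X, (∃ u : U, ∃ s ∈ S, χ u • s = q) →
      ∃ f : G, ∀ h : G, h • q = q → (f⁻¹ * h * f) • p = p :=
  stabilizer_conjugate_into_of_slice_general G X p S hii U χ
end

section
/- Let a topological group G act continuously on a topological space X. Suppose that every point p ∈ X with trivial stabilizer G_p = {e} admits a slice S_p through p. Then the set {x ∈ X : G_x = {e}} of points with trivial stabilizer is open in X. -/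
open Pointwise Topology

/-
Condition (ii) of a slice forces the stabilizer of every point of `S` into `G_p`, so the
stabilizer of a point `g • s` of the tube `G • S` lies in the conjugate `g G_p g⁻¹`. By (iii)
the part `χ(U) • S` of the tube is an open neighborhood of `p`; when `G_p` is trivial, every
point of it has trivial stabilizer.
-/

namespace IsSlice

variable {G X : Type*} [Group G] [TopologicalSpace G] [TopologicalSpace X] [MulAction G X]
  {p : X} {S : Set X}

theorem stabilizer_le (hS : IsSlice G p S) {s : X} (hs : s ∈ S) :
    MulAction.stabilizer G s ≤ MulAction.stabilizer G p := fun g hg =>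
  hS.2.2.1 g ⟨s, ⟨s, hs, hg⟩, hs⟩

theorem stabilizer_smul_le (hS : IsSlice G p S) (g : G) {s : X} (hs : s ∈ S) :
    MulAction.stabilizer G (g • s) ≤
      (MulAction.stabilizer G p).map (MulAut.conj g).toMonoidHom := by
  rw [MulAction.stabilizer_smul_eq_stabilizer_map_conj]
  exact Subgroup.map_mono (hS.stabilizer_le hs)

theorem exists_isOpen_forall_stabilizer_le (hS : IsSlice G p S) :
    ∃ V : Set X, IsOpen V ∧ p ∈ V ∧ ∀ x ∈ V, ∃ g : G,
      MulAction.stabilizer G x ≤ (MulAction.stabilizer G p).map (MulAut.conj g).toMonoidHom := by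
  obtain ⟨U, -, -, χ, -, -, hopen, hp⟩ := hS.2.2.2
  refine ⟨_, hopen.isOpen_range, hp, ?_⟩
  rintro _ ⟨⟨u, s, hs⟩, rfl⟩
  exact ⟨χ u, hS.stabilizer_smul_le (χ u) hs⟩

end IsSlice

theorem isOpen_trivialStabilizer_of_slices_general
    (G X : Type*) [Group G] [TopologicalSpace G]
    [TopologicalSpace X] [MulAction G X]
    (hslice : ∀ p : X, (∀ g : G, g • p = p → g = 1) → ∃ S : Set X, IsSlice G p S) :
    IsOpen {x : X | ∀ g : G, g • x = x → g = 1} := by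
  rw [isOpen_iff_forall_mem_open]
  intro p hp
  have hp_bot : MulAction.stabilizer G p = ⊥ := (Subgroup.eq_bot_iff_forall _).mpr hp
  obtain ⟨S, hS⟩ := hslice p hp
  obtain ⟨V, hV, hpV, hstab⟩ := hS.exists_isOpen_forall_stabilizer_le
  refine ⟨V, fun x hx => ?_, hV, hpV⟩
  obtain ⟨g, hg⟩ := hstab x hx
  rw [hp_bot, Subgroup.map_bot, le_bot_iff] at hg
  exact (Subgroup.eq_bot_iff_forall _).mp hg

/-- Let a topological group `G` act continuously on a topological space
`X`.  If every point with trivial stabilizer admits a slice, then the set of points with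
trivial stabilizer is open in `X`. -/
theorem isOpen_trivialStabilizer_of_slices
    (G X : Type*) [Group G] [TopologicalSpace G] [IsTopologicalGroup G]
    [TopologicalSpace X] [MulAction G X] [ContinuousSMul G X]
    (hslice : ∀ p : X, (∀ g : G, g • p = p → g = 1) → ∃ S : Set X, IsSlice G p S) :
    IsOpen {x : X | ∀ g : G, g • x = x → g = 1} :=
  isOpen_trivialStabilizer_of_slices_general G X hslice
end
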